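/- arXiv:0805.4377 — 5 statements merged into one kernel-verified Lean document; each statement's English description precedes it below -/
import Mathlib

section
/- Let n be a natural number and let W be an arbitrary subset of (Fin n → ℂ). Write 𝟙 for the constant function with value 1. If α : Fin n → ℂ satisfies that for every t ∈ ℂ the point (fun i => Complex.exp (t * α i)) belongs to W, then α belongs to the tangent cone tangentConeAt ℂ W 𝟙 of W at 𝟙. In particular, the exponential tangent cone ETC₁(W) is contained in tangentConeAt ℂ W 𝟙. (Lemma 2.4(i) of the paper.) -/
open Filter Topology

theorem HasDerivAt.mem_tangentConeAt_of_eventually_mem {𝕜 E : Type*} [NontriviallyNormedField 𝕜]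
    [NormedAddCommGroup E] [NormedSpace 𝕜 E] {γ : 𝕜 → E} {v : E} {t₀ : 𝕜} {s : Set E}
    (hγ : HasDerivAt γ v t₀) (hs : ∀ᶠ t in 𝓝 t₀, γ t ∈ s) :
    v ∈ tangentConeAt 𝕜 s (γ t₀) := by
  have hv : v ∈ tangentConeAt 𝕜 (γ '' {t | γ t ∈ s}) (γ t₀) := by
    simpa using (hγ.hasFDerivAt.hasFDerivWithinAt (s := {t | γ t ∈ s})).mapsTo_tangent_cone
      (show (1 : 𝕜) ∈ _ by simp [tangentConeAt_of_mem_nhds hs])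
  exact tangentConeAt_mono (Set.image_subset_iff.mpr fun _ ht ↦ ht) hv

theorem hasDerivAt_exp_mul_pi {ι : Type*} [Fintype ι] (α : ι → ℂ) :
    HasDerivAt (fun t : ℂ ↦ fun i ↦ Complex.exp (t * α i)) α 0 := by
  refine hasDerivAt_pi.mpr fun i ↦ ?_
  simpa using ((hasDerivAt_id (0 : ℂ)).mul_const (α i)).cexp

/-- Lemma 2.4(i): the exponential tangent cone is contained in the tangent cone at `𝟙`. -/
theorem exponential_tangent_cone_subset_tangentCone
    (n : ℕ) (W : Set (Fin n → ℂ)) (α : Fin n → ℂ)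
    (hα : ∀ t : ℂ, (fun i => Complex.exp (t * α i)) ∈ W) :
    α ∈ tangentConeAt ℂ W (fun _ => (1 : ℂ)) := by
  simpa using (hasDerivAt_exp_mul_pi α).mem_tangentConeAt_of_eventually_mem (.of_forall hα)
end

section
/- Let n be a natural number and S a set of polynomials in MvPolynomial (Fin n) ℂ, and let W = {z : Fin n → ℂ | ∀ p ∈ S, MvPolynomial.eval z p = 0}. Then the exponential tangent cone ETC₁(W) = {α : Fin n → ℂ | ∀ t : ℂ, (fun i => Complex.exp (t * α i)) ∈ W} is a finite union of rationally defined ℂ-linear subspaces of (Fin n → ℂ): there exist m : ℕ and ℂ-submodules V₁, …, V_m of (Fin n → ℂ), each rationally defined, with ETC₁(W) = V₁ ∪ ⋯ ∪ V_m. (Lemma 2.4(ii) of the paper.) -/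
open Complex

/-! ### Auxiliary definitions and lemmas -/

/-- The character `t ↦ exp (w * t)` as a monoid hom from `Multiplicative ℂ`. -/
noncomputable def expChar (w : ℂ) : Multiplicative ℂ →* ℂ where
  toFun t := Complex.exp (w * t.toAdd)
  map_one' := by simp
  map_mul' x y := by simp [mul_add, Complex.exp_add]

lemma expChar_injective : Function.Injective expChar := by
  intro w w' h
  have h1 : ∀ t : ℂ, Complex.exp (w * t) = Complex.exp (w' * t) := fun t =>
    congrFun (congrArg (fun f : Multiplicative ℂ →* ℂ => (f : Multiplicative ℂ → ℂ))
      h) (Multiplicative.ofAdd t)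
  have hfe : (fun t : ℂ => Complex.exp (w * t)) = fun t => Complex.exp (w' * t) :=
    funext h1
  have hw : HasDerivAt (fun t : ℂ => Complex.exp (w * t)) (Complex.exp (w * 0) * (w * 1)) 0 :=
    ((hasDerivAt_id (0:ℂ)).const_mul w).cexp
  have hw' : HasDerivAt (fun t : ℂ => Complex.exp (w * t)) (Complex.exp (w' * 0) * (w' * 1)) 0 := by
    rw [hfe]
    exact ((hasDerivAt_id (0:ℂ)).const_mul w').cexp
  have := hw.unique hw'
  simpa using this

/-- Grouping an exponential sum by frequencies. -/
lemma expsum_group {ι : Type*} [DecidableEq ι] (s : Finset ι) (w c : ι → ℂ) (t : ℂ) :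
    ∑ i ∈ s, c i * Complex.exp (w i * t) =
      ∑ v ∈ s.image w, (∑ i ∈ s.filter (fun i => w i = v), c i) * Complex.exp (v * t) := by
  classical
  rw [← Finset.sum_fiberwise_of_maps_to (g := w) (fun i hi => Finset.mem_image_of_mem w hi)
      (fun i => c i * Complex.exp (w i * t))]
  refine Finset.sum_congr rfl fun v hv => ?_
  rw [Finset.sum_mul]
  refine Finset.sum_congr rfl fun i hi => ?_
  rw [(Finset.mem_filter.mp hi).2]

/-- If an exponential sum vanishes identically, each frequency-fiber coefficient sum is zero. -/
lemma expsum_fibers_eq_zero {ι : Type*} [DecidableEq ι] (s : Finset ι) (w c : ι → ℂ)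
    (h : ∀ t : ℂ, ∑ i ∈ s, c i * Complex.exp (w i * t) = 0) (v : ℂ) :
    ∑ i ∈ s.filter (fun i => w i = v), c i = 0 := by
  classical
  by_cases hv : v ∈ s.image w
  · have hLI : LinearIndependent ℂ
        (fun x : (s.image w) => ((expChar x.1 :) : Multiplicative ℂ → ℂ)) := by
      refine (linearIndependent_monoidHom (Multiplicative ℂ) ℂ).comp
        (fun x : (s.image w) => expChar x.1) ?_
      intro x y hxy
      exact Subtype.ext (expChar_injective hxy)
    have hz : ∑ x : (s.image w), (∑ i ∈ s.filter (fun i => w i = x.1), c i) •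
        ((expChar x.1 :) : Multiplicative ℂ → ℂ) = 0 := by
      funext t
      have := h t.toAdd
      rw [expsum_group] at this
      simpa [Finset.sum_apply, expChar, Finset.sum_attach (s.image w)
        (fun v => (∑ i ∈ s.filter (fun i => w i = v), c i) * Complex.exp (v * t.toAdd))]
        using this
    have := Fintype.linearIndependent_iff.mp hLI
      (fun x => ∑ i ∈ s.filter (fun i => w i = x.1), c i) hz ⟨v, hv⟩
    simpa using this
  · have : s.filter (fun i => w i = v) = ∅ := by
      refine Finset.filter_false_of_mem fun i hi hw => ?_
      exact hv (hw ▸ Finset.mem_image_of_mem w hi)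
    simp [this]

/-- The linear functional `α ↦ ∑ i, d i * α i`. -/
noncomputable def Lfun {n : ℕ} (d : Fin n →₀ ℕ) : (Fin n → ℂ) →ₗ[ℂ] ℂ where
  toFun α := ∑ i, (d i : ℂ) * α i
  map_add' α β := by simp [mul_add, Finset.sum_add_distrib]
  map_smul' r α := by simp [Finset.mul_sum]; exact Finset.sum_congr rfl fun i _ => by ring

lemma eval_exp_eq {n : ℕ} (p : MvPolynomial (Fin n) ℂ) (α : Fin n → ℂ) (t : ℂ) :
    MvPolynomial.eval (fun i => Complex.exp (t * α i)) p =
      ∑ d ∈ p.support, p.coeff d * Complex.exp (Lfun d α * t) := by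
  rw [MvPolynomial.eval_eq']
  refine Finset.sum_congr rfl fun d _ => ?_
  congr 1
  have : ∀ i, Complex.exp (t * α i) ^ d i = Complex.exp ((d i : ℂ) * (t * α i)) := fun i =>
    (Complex.exp_nat_mul _ _).symm
  simp only [this, ← Complex.exp_sum]
  congr 1
  simp only [Lfun, LinearMap.coe_mk, AddHom.coe_mk, Finset.sum_mul]
  exact Finset.sum_congr rfl fun i _ => by ring

/-- The per-polynomial fiber-sum condition. -/
def Cnd {n : ℕ} (p : MvPolynomial (Fin n) ℂ) (α : Fin n → ℂ) : Prop :=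
  ∀ d₀ ∈ p.support,
    ∑ d ∈ p.support.filter (fun d => Lfun d α = Lfun d₀ α), p.coeff d = 0

lemma cnd_iff {n : ℕ} (p : MvPolynomial (Fin n) ℂ) (α : Fin n → ℂ) :
    (∀ t : ℂ, MvPolynomial.eval (fun i => Complex.exp (t * α i)) p = 0) ↔ Cnd p α := by
  classical
  constructor
  · intro h d₀ _
    exact expsum_fibers_eq_zero p.support (fun d => Lfun d α) (fun d => p.coeff d)
      (fun t => by rw [← eval_exp_eq]; exact h t) (Lfun d₀ α)
  · intro h t
    rw [eval_exp_eq, expsum_group]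
    refine Finset.sum_eq_zero fun v hv => ?_
    obtain ⟨d₀, hd₀, hvd⟩ := Finset.mem_image.mp hv
    subst hvd
    rw [h d₀ hd₀, zero_mul]

lemma cnd_coarsen {n : ℕ} (p : MvPolynomial (Fin n) ℂ) (α β : Fin n → ℂ)
    (hC : Cnd p α)
    (himp : ∀ d ∈ p.support, ∀ d' ∈ p.support,
      Lfun d α = Lfun d' α → Lfun d β = Lfun d' β) :
    Cnd p β := by
  classical
  intro d₀ hd₀
  set B := p.support.filter (fun d => Lfun d β = Lfun d₀ β) with hB
  have hmaps : ∀ d ∈ B, Lfun d α ∈ B.image (fun d => Lfun d α) :=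
    fun d hd => Finset.mem_image_of_mem _ hd
  rw [← Finset.sum_fiberwise_of_maps_to hmaps (fun d => p.coeff d)]
  refine Finset.sum_eq_zero fun v hv => ?_
  obtain ⟨d₁, hd₁, hvd⟩ := Finset.mem_image.mp hv
  subst hvd
  have hBmem := Finset.mem_filter.mp hd₁
  have : B.filter (fun d => Lfun d α = Lfun d₁ α) =
      p.support.filter (fun d => Lfun d α = Lfun d₁ α) := by
    rw [hB, Finset.filter_filter]
    refine Finset.filter_congr fun d hd => ?_
    constructor
    · exact fun h => h.2
    · intro h
      exact ⟨(himp d hd d₁ hBmem.1 h).trans hBmem.2, h⟩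
  rw [this]
  exact hC d₁ hBmem.1

/-- A ℂ-submodule of `Fin n → ℂ` is rationally defined if it is spanned by a set of
vectors all of whose coordinates are rational. -/
def RationallyDefined {n : ℕ} (V : Submodule ℂ (Fin n → ℂ)) : Prop :=
  ∃ T : Set (Fin n → ℂ),
    (∀ v ∈ T, ∀ i, ∃ q : ℚ, v i = (q : ℂ)) ∧ V = Submodule.span ℂ T

lemma rationallyDefined_of_rat_equations {n : ℕ} (V : Submodule ℂ (Fin n → ℂ))
    {J : Type*} (A : J → Fin n → ℚ)
    (hV : ∀ α, α ∈ V ↔ ∀ j, ∑ i, (A j i : ℂ) * α i = 0) :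
    RationallyDefined V := by
  classical
  refine ⟨{v | (∀ i, ∃ q : ℚ, v i = (q : ℂ)) ∧ v ∈ V}, fun v hv => hv.1, ?_⟩
  refine le_antisymm ?_ (Submodule.span_le.mpr fun v hv => hv.2)
  intro α hα
  set b := Module.Basis.ofVectorSpace ℚ ℂ with hb
  set vcomp : Module.Basis.ofVectorSpaceIndex ℚ ℂ → (Fin n → ℂ) :=
    fun x => fun i => ((b.repr (α i)) x : ℂ) with hvcomp
  have hvT : ∀ x, vcomp x ∈ {v | (∀ i, ∃ q : ℚ, v i = (q : ℂ)) ∧ v ∈ V} := by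
    intro x
    refine ⟨fun i => ⟨(b.repr (α i)) x, rfl⟩, ?_⟩
    rw [hV]
    intro j
    have h0 : ∑ i, (A j i) • (α i) = 0 := by
      have := (hV α).mp hα j
      simpa [Rat.smul_def] using this
    have hQ : ∑ i, A j i * (b.repr (α i)) x = 0 := by
      have h1 : b.repr (∑ i, (A j i) • (α i)) = ∑ i, (A j i) • b.repr (α i) := by
        rw [map_sum]
        exact Finset.sum_congr rfl fun i _ => by rw [map_smul]
      rw [h0, map_zero] at h1
      have h2 := congrFun (congrArg (fun f : _ →₀ ℚ => (f : _ → ℚ)) h1.symm) x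
      simpa [Finset.sum_apply'] using h2
    calc ∑ i, (A j i : ℂ) * (vcomp x i) = ((∑ i, A j i * (b.repr (α i)) x : ℚ) : ℂ) := by
          push_cast [hvcomp]; rfl
      _ = 0 := by rw [hQ]; exact Rat.cast_zero
  set s : Finset (Module.Basis.ofVectorSpaceIndex ℚ ℂ) :=
    Finset.univ.biUnion (fun i : Fin n => (b.repr (α i)).support) with hs
  have hαeq : α = ∑ x ∈ s, (b x : ℂ) • vcomp x := by
    funext i
    have base2 : ∑ a ∈ (b.repr (α i)).support, (b.repr (α i)) a • (b a : ℂ) = α i := by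
      simpa [Finsupp.linearCombination_apply, Finsupp.sum] using b.linearCombination_repr (α i)
    have h1 : ∑ x ∈ s, (b.repr (α i)) x • (b x : ℂ) = α i := by
      refine Eq.trans ?_ base2
      refine (Finset.sum_subset (fun x hx => Finset.mem_biUnion.mpr ⟨i, Finset.mem_univ i, hx⟩)
        (fun x _ hx => ?_)).symm
      rw [Finsupp.notMem_support_iff.mp hx, zero_smul]
    rw [← h1]
    rw [Finset.sum_apply]
    refine Finset.sum_congr rfl fun x _ => ?_
    simp [hvcomp, Rat.smul_def, mul_comm]
  rw [hαeq]
  exact Submodule.sum_mem _ fun x _ =>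
    Submodule.smul_mem _ _ (Submodule.subset_span (hvT x))

lemma vanish_iff_gen {n : ℕ} (S : Set (MvPolynomial (Fin n) ℂ)) :
    ∃ G : Finset (MvPolynomial (Fin n) ℂ),
      ∀ z : Fin n → ℂ, (∀ p ∈ S, MvPolynomial.eval z p = 0) ↔
        ∀ g ∈ G, MvPolynomial.eval z g = 0 := by
  obtain ⟨G, hG⟩ := IsNoetherian.noetherian (Ideal.span S)
  refine ⟨G, fun z => ?_⟩
  have key : ∀ (T : Set (MvPolynomial (Fin n) ℂ)),
      (∀ p ∈ T, MvPolynomial.eval z p = 0) ↔ Ideal.span T ≤ RingHom.ker (MvPolynomial.eval z) := by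
    intro T
    rw [Ideal.span_le]
    constructor
    · intro h p hp; exact RingHom.mem_ker.mpr (h p hp)
    · intro h p hp; exact RingHom.mem_ker.mp (h hp)
  rw [key S, ← hG,
    show Submodule.span (MvPolynomial (Fin n) ℂ) (G : Set _) = Ideal.span (G : Set _) from rfl,
    ← key (G : Set _)]
  simp only [Finset.mem_coe]

/-- Lemma 2.4(ii): the exponential tangent cone of an algebraic subvariety of the torus is
a finite union of rationally defined linear subspaces. -/
theorem exponential_tangent_cone_finite_union_of_rational_subspaces
    (n : ℕ) (S : Set (MvPolynomial (Fin n) ℂ)) :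
    ∃ (m : ℕ) (V : Fin m → Submodule ℂ (Fin n → ℂ)),
      (∀ j, RationallyDefined (V j)) ∧
      {α : Fin n → ℂ | ∀ t : ℂ,
          (fun i => Complex.exp (t * α i)) ∈
            {z : Fin n → ℂ | ∀ p ∈ S, MvPolynomial.eval z p = 0}} =
        ⋃ j, (V j : Set (Fin n → ℂ)) := by
  classical
  obtain ⟨G, hGiff⟩ := vanish_iff_gen S
  -- characterize membership in the exponential tangent cone
  have hchar : ∀ α : Fin n → ℂ,
      (∀ t : ℂ, ∀ p ∈ S, MvPolynomial.eval (fun i => Complex.exp (t * α i)) p = 0) ↔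
        ∀ g ∈ G, Cnd g α := by
    intro α
    constructor
    · intro h g hg
      rw [← cnd_iff]
      exact fun t => (hGiff _).mp (h t) g hg
    · intro h t
      exact (hGiff _).mpr (fun g hg => (cnd_iff g α).mpr (h g hg) t)
  -- the index type of equality patterns
  set I := ∀ g : {x // x ∈ G}, {d // d ∈ (g.1).support} → {d // d ∈ (g.1).support} → Bool with hI
  -- the subspace attached to a pattern
  set Vsub : I → Submodule ℂ (Fin n → ℂ) := fun E =>
    { carrier := {α | ∀ (g : {x // x ∈ G}) d d', E g d d' = true → Lfun d.1 α = Lfun d'.1 α}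
      add_mem' := fun ha hb g d d' h => by
        rw [map_add, map_add, ha g d d' h, hb g d d' h]
      zero_mem' := fun g d d' h => by rw [map_zero, map_zero]
      smul_mem' := fun c a ha g d d' h => by
        rw [map_smul, map_smul, ha g d d' h] } with hVsub
  have hVsub_mem : ∀ (E : I) (α : Fin n → ℂ), α ∈ Vsub E ↔
      ∀ (g : {x // x ∈ G}) d d', E g d d' = true → Lfun d.1 α = Lfun d'.1 α := fun E α =>
    Iff.rfl
  -- each such subspace is rationally defined
  have hrat : ∀ E : I, RationallyDefined (Vsub E) := by
    intro E
    refine rationallyDefined_of_rat_equations (Vsub E)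
      (J := Σ g : {x // x ∈ G}, Σ d : {d // d ∈ (g.1).support}, Σ d' : {d // d ∈ (g.1).support},
        PLift (E g d d' = true))
      (fun j i => (j.2.1.1 i : ℚ) - (j.2.2.1.1 i : ℚ)) ?_
    intro α
    rw [hVsub_mem]
    constructor
    · rintro h ⟨g, d, d', hE⟩
      have := h g d d' hE.down
      simp only [Lfun, LinearMap.coe_mk, AddHom.coe_mk] at this
      push_cast [sub_mul, Finset.sum_sub_distrib]
      rw [this, sub_self]
    · intro h g d d' hE
      have := h ⟨g, d, d', PLift.up hE⟩
      simp only [Lfun, LinearMap.coe_mk, AddHom.coe_mk]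
      push_cast [sub_mul, Finset.sum_sub_distrib] at this
      exact sub_eq_zero.mp this
  -- the good patterns
  set ETC := {α : Fin n → ℂ | ∀ t : ℂ, ∀ p ∈ S,
      MvPolynomial.eval (fun i => Complex.exp (t * α i)) p = 0} with hETC
  set Igood := {E : I // ∀ β ∈ Vsub E, β ∈ ETC} with hIgood
  set e := (Fintype.equivFin Igood).symm with he
  refine ⟨Fintype.card Igood, fun j => Vsub (e j).1, fun j => hrat _, ?_⟩
  ext α
  simp only [Set.mem_setOf_eq, Set.mem_iUnion, SetLike.mem_coe]
  constructor
  · intro hα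
    -- the pattern of α
    set Eα : I := fun g d d' => decide (Lfun d.1 α = Lfun d'.1 α) with hEα
    have hsub : ∀ β ∈ Vsub Eα, β ∈ ETC := by
      intro β hβ
      rw [hETC, Set.mem_setOf_eq]
      rw [hchar β]
      intro g hg
      refine cnd_coarsen g α β ((hchar α).mp hα g hg) ?_
      intro d hd d' hd' heq
      exact hβ ⟨g, hg⟩ ⟨d, hd⟩ ⟨d', hd'⟩ (decide_eq_true heq)
    refine ⟨(Fintype.equivFin Igood) ⟨Eα, hsub⟩, ?_⟩
    rw [he, Equiv.symm_apply_apply]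
    intro g d d' h
    exact of_decide_eq_true h
  · rintro ⟨j, hj⟩
    exact (e j).2 α hj
end

section
/- Let A, B, C be ℂ-vector spaces and f : A →ₗ[ℂ] B, g : B →ₗ[ℂ] C linear maps with g ∘ f = 0. Let F_A, F_B, F_C be decreasing ℤ-filtrations by ℂ-submodules on A, B, C respectively. Assume for all p : ℤ: (a) Submodule.map f (F_A p) ≤ F_B (p+1) and Submodule.map g (F_B p) ≤ F_C (p+1) (compatibility with shift one); (b) LinearMap.range f ⊓ F_B (p+1) ≤ Submodule.map f (F_A p) (strictness of f); (c) LinearMap.range g ⊓ F_C (p+1) ≤ Submodule.map g (F_B p) (strictness of g). Write K = LinearMap.ker g and I = LinearMap.range f (so I ≤ K). Then for every p : ℤ there is a ℂ-linear isomorphism between: (i) the quotient of the submodule K ⊓ F_B p by its submodule (K ⊓ F_B (p+1)) ⊔ (I ⊓ F_B p) — this is the p-th graded piece Gr_F^p of the filtered cohomology H = K/I, where F^p H is the image of K ⊓ F_B p in H — and (ii) the quotient of the submodule F_B p ⊓ Submodule.comap g (F_C (p+2)) by its submodule (Submodule.map f (F_A (p-1))) ⊔ F_B (p+1) — this is the term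 E₂^p, the cohomology at spot p of the associated graded complex Gr_F^{p-1} A → Gr_F^p B → Gr_F^{p+1} C. (This is the key computation 'Gr_F^p H_{p+q} = E₂^{p,q}' in the proof of Corollary 4.1 of the paper.) -/
/-- Auxiliary: two subquotients are isomorphic when `P₁ ≤ P₂`, membership in `Q₂`
and `Q₁` agree on `P₁`, and `P₁` surjects onto `P₂ / Q₂`. -/
lemma subquot_equiv_aux {B : Type*} [AddCommGroup B] [Module ℂ B]
    (P₁ Q₁ P₂ Q₂ : Submodule ℂ B) (h12 : P₁ ≤ P₂)
    (hker : ∀ x ∈ P₁, (x ∈ Q₂ ↔ x ∈ Q₁))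
    (hsurj : ∀ y ∈ P₂, ∃ a ∈ P₁, y - a ∈ Q₂) :
    Nonempty ((↥P₁ ⧸ Q₁.comap P₁.subtype) ≃ₗ[ℂ] (↥P₂ ⧸ Q₂.comap P₂.subtype)) := by
  set φ : ↥P₁ →ₗ[ℂ] (↥P₂ ⧸ Q₂.comap P₂.subtype) :=
    (Q₂.comap P₂.subtype).mkQ.comp (Submodule.inclusion h12) with hφ
  have hkerφ : LinearMap.ker φ = Q₁.comap P₁.subtype := by
    ext x
    simp only [hφ, LinearMap.mem_ker, LinearMap.comp_apply, Submodule.mkQ_apply,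
      Submodule.Quotient.mk_eq_zero, Submodule.mem_comap, Submodule.subtype_apply,
      Submodule.coe_inclusion]
    exact hker x x.2
  have hsurjφ : Function.Surjective φ := by
    intro q
    obtain ⟨y, rfl⟩ := Submodule.Quotient.mk_surjective _ q
    obtain ⟨a, ha, hya⟩ := hsurj (y : B) y.2
    refine ⟨⟨a, ha⟩, ?_⟩
    simp only [hφ, LinearMap.comp_apply, Submodule.mkQ_apply]
    rw [Submodule.Quotient.eq]
    simpa using Q₂.neg_mem hya
  exact ⟨(Submodule.quotEquivOfEq _ _ hkerφ.symm).trans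
    (φ.quotKerEquivOfSurjective hsurjφ)⟩

/-- The key computation `Gr_F^p H = E₂^p` in the proof of Corollary 4.1 of the paper:
for a complex `A → B → C` of filtered vector spaces with strict differentials shifting
the filtration by one, the `p`-th graded piece of the filtered cohomology `H = ker g / im f`
is isomorphic to the cohomology at spot `p` of the associated graded complex. -/
theorem graded_cohomology_iso_E2
    (A B C : Type*) [AddCommGroup A] [Module ℂ A] [AddCommGroup B] [Module ℂ B]
    [AddCommGroup C] [Module ℂ C]
    (f : A →ₗ[ℂ] B) (g : B →ₗ[ℂ] C) (hgf : g ∘ₗ f = 0)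
    (FA : ℤ → Submodule ℂ A) (FB : ℤ → Submodule ℂ B) (FC : ℤ → Submodule ℂ C)
    (hFA : ∀ p : ℤ, FA (p + 1) ≤ FA p) (hFB : ∀ p : ℤ, FB (p + 1) ≤ FB p)
    (hFC : ∀ p : ℤ, FC (p + 1) ≤ FC p)
    (hfcompat : ∀ p : ℤ, Submodule.map f (FA p) ≤ FB (p + 1))
    (hgcompat : ∀ p : ℤ, Submodule.map g (FB p) ≤ FC (p + 1))
    (hfstrict : ∀ p : ℤ, LinearMap.range f ⊓ FB (p + 1) ≤ Submodule.map f (FA p))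
    (hgstrict : ∀ p : ℤ, LinearMap.range g ⊓ FC (p + 1) ≤ Submodule.map g (FB p))
    (p : ℤ) :
    Nonempty (
      (↥(LinearMap.ker g ⊓ FB p) ⧸
        (((LinearMap.ker g ⊓ FB (p + 1)) ⊔ (LinearMap.range f ⊓ FB p)).comap
          (LinearMap.ker g ⊓ FB p).subtype))
      ≃ₗ[ℂ]
      (↥(FB p ⊓ Submodule.comap g (FC (p + 2))) ⧸
        ((Submodule.map f (FA (p - 1)) ⊔ FB (p + 1)).comap
          (FB p ⊓ Submodule.comap g (FC (p + 2))).subtype))) := by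
  have hgf' : ∀ a : A, g (f a) = 0 := fun a => congrFun (congrArg DFunLike.coe hgf) a
  apply subquot_equiv_aux
  · -- P₁ ≤ P₂
    rintro x ⟨hK, hF⟩
    refine ⟨hF, ?_⟩
    have h0 : g x = 0 := hK
    have : g x ∈ FC (p + 2) := by rw [h0]; exact (FC (p + 2)).zero_mem
    exact Submodule.mem_comap.mpr this
  · -- kernel condition
    rintro x ⟨hK, hF⟩
    constructor
    · intro hx
      obtain ⟨fa, hfa, y, hy, hxy⟩ := Submodule.mem_sup.mp hx
      obtain ⟨a, _, rfl⟩ := hfa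
      have hyK : y ∈ LinearMap.ker g := by
        have : g y = g x - g (f a) := by rw [← hxy]; simp
        simp [LinearMap.mem_ker, this, hgf' a, show g x = 0 from hK]
      have hfaF : f a ∈ FB p := by
        have : f a = x - y := by rw [← hxy]; abel
        rw [this]
        exact (FB p).sub_mem hF (hFB p hy)
      rw [← hxy]
      exact Submodule.add_mem _
        (Submodule.mem_sup_right (Submodule.mem_inf.mpr ⟨⟨a, rfl⟩, hfaF⟩))
        (Submodule.mem_sup_left (Submodule.mem_inf.mpr ⟨hyK, hy⟩))
    · intro hx
      have h := hfstrict (p - 1)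
      rw [show p - 1 + 1 = p by ring] at h
      have hle : (LinearMap.ker g ⊓ FB (p + 1)) ⊔ (LinearMap.range f ⊓ FB p) ≤
          Submodule.map f (FA (p - 1)) ⊔ FB (p + 1) :=
        sup_le (le_trans inf_le_right le_sup_right) (le_trans h le_sup_left)
      exact hle hx
  · -- surjectivity condition
    rintro y ⟨hyF, hyC⟩
    have hrange : g y ∈ LinearMap.range g ⊓ FC (p + 1 + 1) := by
      refine ⟨⟨y, rfl⟩, ?_⟩
      rwa [show p + 1 + 1 = p + 2 by ring]
    obtain ⟨z, hz, hgz⟩ := hgstrict (p + 1) hrange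
    refine ⟨y - z, ⟨?_, ?_⟩, ?_⟩
    · simp [LinearMap.mem_ker, hgz]
    · exact (FB p).sub_mem hyF (hFB p hz)
    · have : y - (y - z) = z := by abel
      rw [this]
      exact Submodule.mem_sup_right hz
end

section
/- Let n be a natural number and let E be a rationally defined ℂ-submodule of (Fin n → ℂ). Let exp(E) ⊆ (Fin n → ℂ) denote the image of E under the componentwise exponential, exp(E) = {(fun i => Complex.exp (z i)) | z ∈ E}, and write 𝟙 for the constant function with value 1. Then both the exponential tangent cone and the tangent cone of exp(E) at 𝟙 recover E: ETC₁(exp(E)) = E and tangentConeAt ℂ (exp(E)) 𝟙 = E. (This is the concrete content of the final assertion of Theorem 2.1 of the paper: for a component W = exp(E) with E defined over ℚ, the tangent cone of W at 1 is the linear subspace E.) -/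
/-- The image of a subset of `Fin n → ℂ` under the componentwise exponential map. -/
def expSet {n : ℕ} (E : Set (Fin n → ℂ)) : Set (Fin n → ℂ) :=
  (fun z i => Complex.exp (z i)) '' E

/-! An integer linear form `c` that vanishes on `E` satisfies
`exp (∑ j, c j * w j) = ∏ j, exp (w j) ^ c j`, so `∑ j, c j * w j ∈ 2πiℤ` whenever
`exp w ∈ exp(E)`; and since `E` is defined over `ℚ`, it is cut out by such forms.
If `exp (t α) ∈ exp(E)` for every `t`, then `t * ∑ j, c j * α j ∈ 2πiℤ` for every `t`, which
forces `∑ j, c j * α j = 0`. For the tangent cone, the componentwise logarithm, whose derivative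
at `𝟙` is the identity, maps `exp(E)` into `{w | ∑ j, c j * w j ∈ 2πiℤ}`, a set that agrees near
`0` with the hyperplane `∑ j, c j * w j = 0`. Conversely, `E` lies in the tangent cone because the
componentwise exponential has derivative the identity at `0`. -/

open Complex Filter Topology Set Matrix

theorem RationallyDefined.exists_rat_matrix_mem_iff {n : ℕ} {E : Submodule ℂ (Fin n → ℂ)}
    (hE : RationallyDefined E) :
    ∃ P : Matrix (Fin n) (Fin n) ℚ, ∀ x, x ∈ E ↔ P.map (Rat.castHom ℂ) *ᵥ x = x := by
  obtain ⟨T, hT, rfl⟩ := hE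
  set castVec := (Rat.castHom ℂ).toRatAlgHom.toLinearMap.compLeft (Fin n)
  set K := ((Submodule.span ℂ T).restrictScalars ℚ).comap castVec
  obtain ⟨K', hK⟩ := K.exists_isCompl
  -- `P` is the matrix of a projection of `ℚⁿ` onto the rational points `K` of `span T`.
  set p := K.projection K' hK
  set Pℂ := (LinearMap.toMatrix' p).map (Rat.castHom ℂ)
  have hp : ∀ w, Pℂ *ᵥ castVec w = castVec (p w) := fun w => funext fun i => by
    rw [← LinearMap.toMatrix'_mulVec p w]
    exact ((Rat.castHom ℂ).map_mulVec _ w i).symm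
  refine ⟨LinearMap.toMatrix' p, fun x => ⟨fun hx => ?_, fun hx => ?_⟩⟩
  · have hT_fixed : T ⊆ LinearMap.eqLocus Pℂ.mulVecLin LinearMap.id := by
      intro v hv
      choose w hw using hT v hv
      obtain rfl : v = castVec w := funext hw
      have hwK : w ∈ K := Submodule.subset_span hv
      rw [SetLike.mem_coe, LinearMap.mem_eqLocus, Matrix.mulVecLin_apply, LinearMap.id_apply, hp,
        Submodule.projection_apply_of_mem_left hK hwK]
    exact Submodule.span_le.mpr hT_fixed hx
  · have hrange : LinearMap.range Pℂ.mulVecLin ≤ Submodule.span ℂ T := by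
      rw [Matrix.range_mulVecLin, Submodule.span_le]
      rintro _ ⟨j, rfl⟩
      have hcol : Pℂ.col j = castVec (p (Pi.single j 1)) := by
        ext i; simp [Pℂ, castVec, LinearMap.toMatrix'_apply]
      rw [hcol]
      exact Submodule.projection_apply_mem hK (Pi.single j 1)
    exact hx ▸ hrange ⟨x, rfl⟩

theorem Matrix.exists_intCast_eq_smul {m n : Type*} [Finite m] [Finite n] (Q : Matrix m n ℚ) :
    ∃ (b : ℤ) (C : Matrix m n ℤ), b ≠ 0 ∧ C.map (↑) = (b : ℚ) • Q := by
  obtain ⟨⟨b, hb⟩, hbQ⟩ := IsLocalization.exist_integer_multiples_of_finite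
    (nonZeroDivisors ℤ) fun ij : m × n => Q ij.1 ij.2
  choose C hC using hbQ
  refine ⟨b, Matrix.of fun i j => C (i, j), nonZeroDivisors.ne_zero hb, ?_⟩
  ext i j
  simpa using hC (i, j)

theorem RationallyDefined.exists_int_matrix_mem_iff {n : ℕ} {E : Submodule ℂ (Fin n → ℂ)}
    (hE : RationallyDefined E) :
    ∃ C : Matrix (Fin n) (Fin n) ℤ, ∀ x, x ∈ E ↔ ∀ i, ∑ j, (C i j : ℂ) * x j = 0 := by
  obtain ⟨P, hP⟩ := hE.exists_rat_matrix_mem_iff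
  obtain ⟨b, C, hb, hC⟩ := (1 - P).exists_intCast_eq_smul
  have hCℂ : C.map (Int.castRingHom ℂ) = (b : ℂ) • (1 - P.map (Rat.castHom ℂ)) := by
    ext i j
    have hij := congrFun (congrFun hC i) j
    simp only [Matrix.map_apply, Matrix.smul_apply, Matrix.sub_apply, Matrix.one_apply] at hij ⊢
    rw [eq_intCast, ← Rat.cast_intCast, hij]
    split_ifs <;> simp
  refine ⟨C, fun x => ?_⟩
  change _ ↔ ∀ i, (C.map (Int.castRingHom ℂ) *ᵥ x) i = 0
  rw [hP, ← funext_iff, hCℂ, smul_mulVec, sub_mulVec, one_mulVec, ← Pi.zero_def,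
    smul_eq_zero, sub_eq_zero]
  simp [hb, eq_comm]

theorem eq_zero_of_exp_eq_one_of_norm_lt {z : ℂ} (h : exp z = 1) (hz : ‖z‖ < 2 * Real.pi) :
    z = 0 := by
  obtain ⟨k, rfl⟩ := exp_eq_one_iff.mp h
  rcases eq_or_ne k 0 with rfl | hk
  · simp
  have hk1 : (1 : ℝ) ≤ |(k : ℝ)| := by exact_mod_cast Int.one_le_abs hk
  have hnorm : ‖(k : ℂ) * (2 * Real.pi * I)‖ = |(k : ℝ)| * (2 * Real.pi) := by
    simp [abs_of_pos Real.pi_pos]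
  nlinarith [Real.pi_pos]

theorem exp_sum_intCast_mul {ι : Type*} [Fintype ι] (c : ι → ℤ) (w : ι → ℂ) :
    exp (∑ j, (c j : ℂ) * w j) = ∏ j, exp (w j) ^ c j := by
  simp [exp_sum, exp_int_mul]

theorem HasDerivAt.hasFDerivAt_comp_apply {𝕜 ι : Type*} [NontriviallyNormedField 𝕜] [Fintype ι]
    {g : 𝕜 → 𝕜} {g' a : 𝕜} (h : HasDerivAt g g' a) :
    HasFDerivAt (fun (u : ι → 𝕜) j => g (u j)) (g' • ContinuousLinearMap.id 𝕜 (ι → 𝕜))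
      (fun _ => a) :=
  hasFDerivAt_pi'' fun j => (h.hasFDerivAt.comp _ (hasFDerivAt_apply j _)).congr_fderiv <| by
    ext u; simp [mul_comm]

theorem tangentConeAt_setOf_exp_eq_one_subset {F : Type*} [NormedAddCommGroup F]
    [NormedSpace ℂ F] (φ : F →L[ℂ] ℂ) :
    tangentConeAt ℂ {w | exp (φ w) = 1} 0 ⊆ {y | φ y = 0} := by
  intro y hy
  have hU : φ ⁻¹' Metric.ball 0 (2 * Real.pi) ∈ 𝓝 0 :=
    φ.continuous.continuousAt.preimage_mem_nhds
      (by simpa using Metric.ball_mem_nhds (0 : ℂ) Real.two_pi_pos)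
  rw [← tangentConeAt_inter_nhds hU] at hy
  have hmaps : φ '' ({w | exp (φ w) = 1} ∩ φ ⁻¹' Metric.ball 0 (2 * Real.pi)) ⊆ {0} := by
    rintro _ ⟨w, ⟨hw, hwU⟩, rfl⟩
    exact eq_zero_of_exp_eq_one_of_norm_lt hw (by simpa using hwU)
  have hφy := tangentConeAt_mono hmaps (φ.hasFDerivAt.hasFDerivWithinAt.mapsTo_tangent_cone hy)
  have h0 : ¬AccPt (0 : ℂ) (𝓟 {0}) := by
    simp only [accPt_iff_nhds, not_forall]
    exact ⟨univ, univ_mem, by simp⟩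
  simpa using tangentConeAt_subset_zero h0 (by simpa using hφy)

theorem subset_tangentConeAt_expSet {n : ℕ} (E : Submodule ℂ (Fin n → ℂ)) :
    (E : Set (Fin n → ℂ)) ⊆ tangentConeAt ℂ (expSet (E : Set (Fin n → ℂ))) (fun _ => 1) := by
  intro y hy
  have hexp := (hasDerivAt_exp 0).hasFDerivAt_comp_apply (ι := Fin n)
  have hE0 : y ∈ tangentConeAt ℂ (E : Set (Fin n → ℂ)) 0 :=
    mem_tangentConeAt_of_add_smul_mem (l := 𝓝[≠] 0) tendsto_id
      (Eventually.of_forall fun t => by simpa using E.smul_mem t hy)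
  simpa [expSet] using hexp.hasFDerivWithinAt.mapsTo_tangent_cone hE0

section IntForm

variable {n : ℕ} {E : Submodule ℂ (Fin n → ℂ)} {c : Fin n → ℤ}

theorem exp_sum_intCast_mul_eq_one (hc : ∀ v ∈ E, ∑ j, (c j : ℂ) * v j = 0) {w : Fin n → ℂ}
    (hw : (fun j => exp (w j)) ∈ expSet (E : Set (Fin n → ℂ))) :
    exp (∑ j, (c j : ℂ) * w j) = 1 := by
  obtain ⟨z, hz, hzw⟩ := hw
  have hexp : ∀ j, exp (w j) = exp (z j) := fun j => (congrFun hzw j).symm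
  simp_rw [exp_sum_intCast_mul, hexp, ← exp_sum_intCast_mul, hc z hz, exp_zero]

theorem sum_intCast_mul_eq_zero_of_forall_exp_mem (hc : ∀ v ∈ E, ∑ j, (c j : ℂ) * v j = 0)
    {α : Fin n → ℂ} (hα : ∀ t : ℂ, (fun i => exp (t * α i)) ∈ expSet (E : Set (Fin n → ℂ))) :
    ∑ j, (c j : ℂ) * α j = 0 := by
  by_contra hL
  have h1 := exp_sum_intCast_mul_eq_one hc (hα (∑ j, (c j : ℂ) * α j)⁻¹)
  have hsum : ∑ j, (c j : ℂ) * ((∑ j, (c j : ℂ) * α j)⁻¹ * α j) = 1 := by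
    simp_rw [mul_left_comm _ (_⁻¹ : ℂ), ← Finset.mul_sum, inv_mul_cancel₀ hL]
  rw [hsum] at h1
  exact one_ne_zero (eq_zero_of_exp_eq_one_of_norm_lt h1 (by simp; linarith [Real.pi_gt_three]))

theorem sum_intCast_mul_eq_zero_of_mem_tangentConeAt (hc : ∀ v ∈ E, ∑ j, (c j : ℂ) * v j = 0)
    {y : Fin n → ℂ} (hy : y ∈ tangentConeAt ℂ (expSet (E : Set (Fin n → ℂ))) (fun _ => 1)) :
    ∑ j, (c j : ℂ) * y j = 0 := by
  set φ := LinearMap.toContinuousLinearMap (dotProductBilin ℂ ℂ fun j => (c j : ℂ))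
  have hlog := (hasDerivAt_log one_mem_slitPlane).hasFDerivAt_comp_apply (ι := Fin n)
  have himage : (fun u j => log (u j)) '' expSet (E : Set (Fin n → ℂ)) ⊆
      {w | exp (φ w) = 1} := by
    rintro _ ⟨_, ⟨z, hz, rfl⟩, rfl⟩
    have hexp : (fun j => exp (log (exp (z j)))) = fun j => exp (z j) :=
      funext fun j => exp_log (exp_ne_zero _)
    exact exp_sum_intCast_mul_eq_one hc (hexp ▸ ⟨z, hz, rfl⟩)
  have hy' := tangentConeAt_mono himage (hlog.hasFDerivWithinAt.mapsTo_tangent_cone hy)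
  have hy0 : y ∈ tangentConeAt ℂ {w | exp (φ w) = 1} 0 := by simpa [← Pi.zero_def] using hy'
  exact tangentConeAt_setOf_exp_eq_one_subset φ hy0

end IntForm

/-- For a rationally defined subspace `E`, both the exponential tangent cone and the
tangent cone of `exp(E)` at the all-ones point recover `E` (Theorem 2.1 of the paper). -/
theorem tangent_cones_of_exp_of_rational_subspace
    (n : ℕ) (E : Submodule ℂ (Fin n → ℂ)) (hE : RationallyDefined E) :
    {α : Fin n → ℂ | ∀ t : ℂ,
        (fun i => Complex.exp (t * α i)) ∈ expSet (E : Set (Fin n → ℂ))} =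
      (E : Set (Fin n → ℂ)) ∧
    tangentConeAt ℂ (expSet (E : Set (Fin n → ℂ))) (fun _ => (1 : ℂ)) =
      (E : Set (Fin n → ℂ)) := by
  obtain ⟨C, hC⟩ := hE.exists_int_matrix_mem_iff
  have hrow : ∀ i, ∀ v ∈ E, ∑ j, (C i j : ℂ) * v j = 0 := fun i v hv => (hC v).mp hv i
  refine ⟨Subset.antisymm (fun α hα => ?_) fun α hα t => ⟨t • α, E.smul_mem t hα, rfl⟩,
    Subset.antisymm (fun y hy => ?_) (subset_tangentConeAt_expSet E)⟩
  · exact (hC α).mpr fun i => sum_intCast_mul_eq_zero_of_forall_exp_mem (hrow i) hα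
  · exact (hC y).mpr fun i => sum_intCast_mul_eq_zero_of_mem_tangentConeAt (hrow i) hy
end

section
/- Let n and m be natural numbers and let E₁, …, E_m be rationally defined ℂ-submodules of (Fin n → ℂ). Let W = exp(E₁) ∪ ⋯ ∪ exp(E_m), where exp(E) denotes the image of E under the componentwise exponential, and write 𝟙 for the constant function with value 1. Then the exponential tangent cone and the tangent cone of W at 𝟙 coincide and are both equal to the union of the subspaces: ETC₁(W) = tangentConeAt ℂ W 𝟙 = E₁ ∪ ⋯ ∪ E_m. (This is the concrete mechanism behind Corollary 2.7 of the paper: when every irreducible component of a subvariety W of the character torus through 1 is of the form exp(E) with E rationally defined, one has ETC₁(W) = TC₁(W).) -/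
open Filter Topology Complex
open scoped Real Matrix

theorem exists_mem_of_forall_smul_sub_mem {K V ι : Type*} [Field K] [Uncountable K]
    [AddCommGroup V] [Module K V] [Countable ι] (E : ι → Submodule K V) {Λ : Set V}
    (hΛ : Λ.Countable) {α : V} (h : ∀ t : K, ∃ j, ∃ v ∈ Λ, t • α - v ∈ E j) :
    ∃ j, α ∈ E j := by
  by_contra! hα
  have hsub : ∀ j v, {t : K | t • α - v ∈ E j}.Subsingleton := by
    intro j v t₁ ht₁ t₂ ht₂
    by_contra hne
    have h₁₂ : (t₁ - t₂) • α ∈ E j := by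
      simpa [sub_smul] using (E j).sub_mem ht₁ ht₂
    exact hα j (by simpa [sub_ne_zero.2 hne] using (E j).smul_mem (t₁ - t₂)⁻¹ h₁₂)
  have hcover : (Set.univ : Set K) ⊆ ⋃ j, ⋃ v ∈ Λ, {t : K | t • α - v ∈ E j} := by
    intro t _
    simpa using h t
  exact not_countable (Set.countable_univ_iff.1 <| .mono hcover <|
    Set.countable_iUnion fun j ↦ hΛ.biUnion fun v _ ↦ (hsub j v).countable)

theorem tangentConeAt_zero_eq_self {𝕜 E : Type*} [NontriviallyNormedField 𝕜]
    [NormedAddCommGroup E] [NormedSpace 𝕜 E] {C : Set E} (hC : IsClosed C)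
    (hsmul : ∀ c : 𝕜, ∀ x ∈ C, c • x ∈ C) : tangentConeAt 𝕜 C 0 = C := by
  refine subset_antisymm (fun y hy ↦ ?_) (fun y hy ↦ ?_)
  · obtain ⟨_, l, _, c, d, -, hds, hcd⟩ := exists_fun_of_mem_tangentConeAt hy
    exact hC.mem_of_tendsto hcd (hds.mono fun k hk ↦ hsmul _ _ (by simpa using hk))
  · refine mem_tangentConeAt_of_add_smul_mem (l := 𝓝[≠] (0 : 𝕜)) tendsto_id ?_
    exact .of_forall fun c ↦ by simpa using hsmul c y hy

theorem exp_comp_eq_exp_comp_iff {ι : Type*} {x y : ι → ℂ} :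
    (fun i ↦ exp (x i)) = (fun i ↦ exp (y i)) ↔
      ∃ μ : ι → ℤ, x = y + (2 * π * I) • fun i ↦ (μ i : ℂ) := by
  simp only [funext_iff, exp_eq_exp_iff_exists_int, Classical.skolem, Pi.add_apply,
    Pi.smul_apply, smul_eq_mul, mul_comm (2 * π * I)]

theorem eq_zero_of_norm_intCast_lt_one {ι : Type*} [Fintype ι] {ν : ι → ℤ}
    (h : ‖fun i ↦ (ν i : ℂ)‖ < 1) : ν = 0 := by
  ext i
  have := (norm_le_pi_norm (fun i ↦ (ν i : ℂ)) i).trans_lt h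
  rw [norm_intCast] at this
  exact Int.abs_lt_one_iff.1 (by exact_mod_cast this)

section

variable {n : ℕ}

namespace RationallyDefined

variable {E : Submodule ℂ (Fin n → ℂ)}

theorem exists_isProj_map_ratCast (hE : RationallyDefined E) :
    ∃ B : Matrix (Fin n) (Fin n) ℚ, LinearMap.IsProj E (B.map ((↑) : ℚ → ℂ)).mulVecLin := by
  obtain ⟨T, hT, rfl⟩ := hE
  let castVec : (Fin n → ℚ) →ₗ[ℚ] (Fin n → ℂ) := (Algebra.linearMap ℚ ℂ).compLeft (Fin n)
  let F := ((Submodule.span ℂ T).restrictScalars ℚ).comap castVec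
  obtain ⟨G, hG⟩ := F.exists_isCompl
  let Pq := F.projection G hG
  let B := LinearMap.toMatrix' Pq
  have hcast : ∀ v, (B.map ((↑) : ℚ → ℂ)).mulVecLin (castVec v) = castVec (Pq v) := fun v ↦ by
    ext i
    simpa [B, castVec, LinearMap.compLeft, Function.comp_def] using
      (RingHom.map_mulVec (Rat.castHom ℂ) B v i).symm
  refine ⟨B, ⟨fun x ↦ ?_, fun x hx ↦ ?_⟩⟩
  · have hx := LinearMap.mem_range_self (B.map ((↑) : ℚ → ℂ)).mulVecLin x
    rw [Matrix.range_mulVecLin] at hx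
    refine Submodule.span_le.2 ?_ hx
    rintro _ ⟨j, rfl⟩
    have hcol : (B.map ((↑) : ℚ → ℂ)).col j = castVec (Pq (Pi.single j 1)) := by
      ext i
      simp [B, castVec, LinearMap.toMatrix'_apply]
    rw [hcol]
    exact F.projection_apply_mem hG _
  · refine (Submodule.span_le (p := LinearMap.eqLocus _ LinearMap.id)).2 (fun v hv ↦ ?_) hx
    choose w hw using hT v hv
    have hvw : v = castVec w := funext fun i ↦ hw i
    have hwF : w ∈ F := show castVec w ∈ Submodule.span ℂ T from hvw ▸ Submodule.subset_span hv
    rw [SetLike.mem_coe, LinearMap.mem_eqLocus, hvw, hcast, LinearMap.id_apply,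
      F.projection_apply_of_mem_left hG hwF]

theorem exists_ker_map_intCast (hE : RationallyDefined E) :
    ∃ N : Matrix (Fin n) (Fin n) ℤ, LinearMap.ker (N.map ((↑) : ℤ → ℂ)).mulVecLin = E := by
  obtain ⟨B, hB⟩ := hE.exists_isProj_map_ratCast
  obtain ⟨⟨b, hb⟩, hN⟩ := IsLocalization.exist_integer_multiples_of_finite (nonZeroDivisors ℤ)
    fun p : Fin n × Fin n ↦ (1 - B) p.1 p.2
  choose N hN using hN
  have hb0 : (b : ℂ) ≠ 0 := by exact_mod_cast nonZeroDivisors.ne_zero hb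
  have hNB : (Matrix.of fun i j ↦ N (i, j)).map ((↑) : ℤ → ℂ) = (b : ℂ) • (1 - B.map (↑)) := by
    ext i j
    have := congrArg ((↑) : ℚ → ℂ) (hN (i, j))
    push_cast [algebraMap_int_eq, eq_intCast, zsmul_eq_mul, Matrix.one_apply] at this
    simp [this, Matrix.one_apply, apply_ite]
  refine ⟨.of fun i j ↦ N (i, j), ?_⟩
  ext x
  rw [LinearMap.mem_ker, hNB, hB.mem_iff_map_id]
  simp [hb0, sub_eq_zero, eq_comm]

theorem eventually_mem_of_exp_mem_expSet (hE : RationallyDefined E) :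
    ∀ᶠ γ in 𝓝 (0 : Fin n → ℂ), (fun i ↦ exp (γ i)) ∈ expSet (E : Set (Fin n → ℂ)) → γ ∈ E := by
  obtain ⟨N, hN⟩ := hE.exists_ker_map_intCast
  set L := (N.map ((↑) : ℤ → ℂ)).mulVecLin
  have hL : Tendsto L (𝓝 0) (𝓝 0) := by
    simpa using (LinearMap.continuous_of_finiteDimensional L).tendsto 0
  filter_upwards [hL (Metric.ball_mem_nhds 0 Real.two_pi_pos)]
  rintro γ hγ ⟨β, hβ, hexp⟩
  obtain ⟨μ, rfl⟩ := exp_comp_eq_exp_comp_iff.1 hexp.symm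
  rw [← hN] at hβ ⊢
  have hLμ : L (β + (2 * π * I) • fun i ↦ (μ i : ℂ)) =
      (2 * π * I) • fun i ↦ ((N *ᵥ μ) i : ℂ) := by
    rw [map_add, LinearMap.mem_ker.1 hβ, zero_add, map_smul]
    congr 1
    ext i
    exact (RingHom.map_mulVec (Int.castRingHom ℂ) N μ i).symm
  have hNμ : N *ᵥ μ = 0 := by
    refine eq_zero_of_norm_intCast_lt_one ?_
    have h2πI : ‖2 * (π : ℂ) * I‖ = 2 * π := by simp [Real.pi_pos.le]
    rw [Set.mem_preimage, mem_ball_zero_iff, hLμ, norm_smul, h2πI] at hγ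
    exact (mul_lt_iff_lt_one_right Real.two_pi_pos).1 hγ
  rw [LinearMap.mem_ker, hLμ, hNμ]
  ext
  simp

end RationallyDefined

theorem hasFDerivAt_exp_comp_zero :
    HasFDerivAt (fun (z : Fin n → ℂ) i ↦ exp (z i)) (ContinuousLinearMap.id ℂ _) 0 := by
  refine hasFDerivAt_pi'' fun i ↦ ?_
  simpa using (hasFDerivAt_apply (𝕜 := ℂ) i (0 : Fin n → ℂ)).cexp

theorem hasFDerivAt_log_comp_one :
    HasFDerivAt (fun (x : Fin n → ℂ) i ↦ log (x i)) (ContinuousLinearMap.id ℂ _) 1 := by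
  refine hasFDerivAt_pi'' fun i ↦ ?_
  simpa using (hasFDerivAt_apply i (1 : Fin n → ℂ)).clog (by simp)

theorem tangentConeAt_subset_tangentConeAt_expSet (S : Set (Fin n → ℂ)) :
    tangentConeAt ℂ S 0 ⊆ tangentConeAt ℂ (expSet S) 1 := by
  intro y hy
  simpa [expSet, Pi.one_def] using
    hasFDerivAt_exp_comp_zero.hasFDerivWithinAt.mapsTo_tangent_cone (s := S) hy

theorem tangentConeAt_expSet_subset {S : Set (Fin n → ℂ)}
    (hS : ∀ᶠ γ in 𝓝 0, (fun i ↦ exp (γ i)) ∈ expSet S → γ ∈ S) :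
    tangentConeAt ℂ (expSet S) 1 ⊆ tangentConeAt ℂ S 0 := by
  set g := fun (x : Fin n → ℂ) i ↦ log (x i)
  have hg1 : g 1 = 0 := by ext; simp [g]
  have hU : ∀ᶠ x in 𝓝 (1 : Fin n → ℂ), x ∈ expSet S → g x ∈ S := by
    have hne : ∀ᶠ x in 𝓝 (1 : Fin n → ℂ), ∀ i, x i ≠ 0 := eventually_all.2 fun i ↦
      (continuous_apply i).continuousAt.eventually_ne one_ne_zero
    have hlog := hasFDerivAt_log_comp_one.continuousAt.tendsto.eventually (hg1 ▸ hS)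
    filter_upwards [hne, hlog] with x hx hxS hmem
    refine hxS ?_
    convert hmem
    exact exp_log (hx _)
  rw [← tangentConeAt_inter_nhds hU]
  intro y hy
  have hy' : y ∈ tangentConeAt ℂ (g '' _) (g 1) :=
    hasFDerivAt_log_comp_one.hasFDerivWithinAt.mapsTo_tangent_cone hy
  rw [hg1] at hy'
  exact tangentConeAt_mono (Set.image_subset_iff.2 fun x hx ↦ hx.2 hx.1) hy'

theorem expSet_iUnion {ι : Type*} (S : ι → Set (Fin n → ℂ)) :
    expSet (⋃ j, S j) = ⋃ j, expSet (S j) :=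
  Set.image_iUnion

theorem tangentConeAt_expSet {S : Set (Fin n → ℂ)}
    (hS : ∀ᶠ γ in 𝓝 0, (fun i ↦ exp (γ i)) ∈ expSet S → γ ∈ S) :
    tangentConeAt ℂ (expSet S) 1 = tangentConeAt ℂ S 0 :=
  (tangentConeAt_expSet_subset hS).antisymm (tangentConeAt_subset_tangentConeAt_expSet S)

theorem forall_exp_smul_mem_iUnion_expSet_iff {ι : Type*} [Countable ι]
    (E : ι → Submodule ℂ (Fin n → ℂ)) {α : Fin n → ℂ} :
    (∀ t : ℂ, (fun i ↦ exp (t * α i)) ∈ ⋃ j, expSet (E j : Set (Fin n → ℂ))) ↔ ∃ j, α ∈ E j := by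
  refine ⟨fun h ↦ ?_, fun ⟨j, hj⟩ t ↦ Set.mem_iUnion.2 ⟨j, t • α, (E j).smul_mem t hj, rfl⟩⟩
  have : Uncountable ℂ := Complex.ofReal_injective.uncountable
  refine exists_mem_of_forall_smul_sub_mem E
    (Set.countable_range fun μ : Fin n → ℤ ↦ (2 * π * I) • fun i ↦ (μ i : ℂ)) fun t ↦ ?_
  obtain ⟨j, β, hβ, hexp⟩ := Set.mem_iUnion.1 (h t)
  obtain ⟨μ, hμ⟩ := exp_comp_eq_exp_comp_iff.1 hexp.symm
  exact ⟨j, _, ⟨μ, rfl⟩, by rwa [show t • α = _ from hμ, add_sub_cancel_right]⟩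

theorem tangentConeAt_iUnion_expSet {ι : Type*} [Finite ι] (E : ι → Submodule ℂ (Fin n → ℂ))
    (hE : ∀ j, RationallyDefined (E j)) :
    tangentConeAt ℂ (⋃ j, expSet (E j : Set (Fin n → ℂ))) 1 = ⋃ j, (E j : Set (Fin n → ℂ)) := by
  have hS : ∀ᶠ γ in 𝓝 0, (fun i ↦ exp (γ i)) ∈ expSet (⋃ j, (E j : Set (Fin n → ℂ))) →
      γ ∈ ⋃ j, (E j : Set (Fin n → ℂ)) := by
    filter_upwards [eventually_all.2 fun j ↦ (hE j).eventually_mem_of_exp_mem_expSet] with γ hγ hmem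
    obtain ⟨j, hj⟩ := Set.mem_iUnion.1 (expSet_iUnion _ ▸ hmem)
    exact Set.mem_iUnion.2 ⟨j, hγ j hj⟩
  rw [← expSet_iUnion, tangentConeAt_expSet hS]
  refine tangentConeAt_zero_eq_self
    (isClosed_iUnion_of_finite fun j ↦ (E j).closed_of_finiteDimensional) fun c x hx ↦ ?_
  obtain ⟨j, hj⟩ := Set.mem_iUnion.1 hx
  exact Set.mem_iUnion.2 ⟨j, (E j).smul_mem c hj⟩

end

/-- Corollary 2.7 of the paper: if `W` is a finite union of exponentials of rationally
defined subspaces `E₁, …, E_m`, then the exponential tangent cone and the tangent cone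
of `W` at the all-ones point coincide, both being equal to `E₁ ∪ ⋯ ∪ E_m`. -/
theorem tangent_cones_of_union_exp_of_rational_subspaces
    (n m : ℕ) (E : Fin m → Submodule ℂ (Fin n → ℂ))
    (hE : ∀ j, RationallyDefined (E j)) :
    {α : Fin n → ℂ | ∀ t : ℂ,
        (fun i => Complex.exp (t * α i)) ∈ ⋃ j, expSet ((E j : Set (Fin n → ℂ)))} =
      ⋃ j, (E j : Set (Fin n → ℂ)) ∧
    tangentConeAt ℂ (⋃ j, expSet ((E j : Set (Fin n → ℂ)))) (fun _ => (1 : ℂ)) =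
      ⋃ j, (E j : Set (Fin n → ℂ)) := by
  exact ⟨Set.ext fun α ↦ (forall_exp_smul_mem_iUnion_expSet_iff E).trans Set.mem_iUnion.symm,
    tangentConeAt_iUnion_expSet E hE⟩
end
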